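/- arXiv:2004.07447 — 11 statements merged into one kernel-verified Lean document; each statement's English description precedes it below -/
import Mathlib

section
/- (Ranking-Matching Lemma) For any election E = (V, C, σ), where σ assigns to each voter i ∈ V a linear order σ_i over C, and for any weight vectors p ∈ Δ(V) and q ∈ Δ(C), there exists a candidate a ∈ C such that for every subset S ⊆ V, the total q-weight of the set of candidates weakly defeated by a in at least one vote of S is at least p(S). Formally: ∃ a ∈ C, ∀ S ⊆ V, q({c ∈ C : ∃ i ∈ S, a ⪰_i c}) ≥ p(S). -/
/-!
Induction on the set `D` of remaining candidates. Let `w i` be the candidate of `D` that voter `i`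
ranks last and let `r` be the pushforward of `p` along `w`. Every `a ∈ D` weakly defeats `w i` in
the vote of `i`, so `p(S)` is at most the `r`-mass of the candidates `a` weakly defeats for `S`;
hence if `r ≤ q` on `D`, any `a ∈ D` works. Otherwise the largest `t` with `t • r ≤ q` is below `1`
and is attained at some `c₀`. The weights `(1 - t) • p` and `q - t • r` still satisfy the mass
condition on `D \ {c₀}`, and the candidate found for them by induction works for `p` and `q`,
since the two bounds add up.
-/

open Finset

theorem IsStrictTotalOrder.exists_forall_eq_or_rel {α : Type*} [Finite α] (r : α → α → Prop)
    [IsStrictTotalOrder α r] {s : Finset α} (hs : s.Nonempty) :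
    ∃ w ∈ s, ∀ b ∈ s, b = w ∨ r b w := by
  obtain ⟨w, hw, hmin⟩ :=
    (Finite.wellFounded_of_trans_of_irrefl (Function.swap r)).has_min (s : Set α) hs
  refine ⟨w, hw, fun b hb => ?_⟩
  by_cases hbw : r b w
  · exact Or.inr hbw
  · exact Or.inl (Std.Trichotomous.trichotomous b w hbw (hmin b hb))

theorem exists_smul_le_of_exists_lt {ι : Type*} {s : Finset ι} {r q : ι → ℝ}
    (hr : ∀ c ∈ s, 0 ≤ r c) (hq : ∀ c ∈ s, 0 ≤ q c) (hlt : ∃ c ∈ s, q c < r c) :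
    ∃ t, 0 ≤ t ∧ t < 1 ∧ ∃ c₀ ∈ s, t * r c₀ = q c₀ ∧ ∀ c ∈ s, t * r c ≤ q c := by
  obtain ⟨c₀, hc₀, hmin⟩ := exists_min_image (s.filter fun c => q c < r c) (fun c => q c / r c)
    (by simpa only [Finset.Nonempty, mem_filter] using hlt)
  obtain ⟨hc₀s, hqr₀⟩ := mem_filter.1 hc₀
  have hr₀ : 0 < r c₀ := (hq c₀ hc₀s).trans_lt hqr₀
  refine ⟨q c₀ / r c₀, div_nonneg (hq c₀ hc₀s) hr₀.le, (div_lt_one hr₀).2 hqr₀, c₀, hc₀s,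
    div_mul_cancel₀ _ hr₀.ne', fun c hc => ?_⟩
  by_cases hqr : q c < r c
  · have hrc : 0 < r c := (hq c hc).trans_lt hqr
    rw [← le_div_iff₀ hrc]
    exact hmin c (mem_filter.2 ⟨hc, hqr⟩)
  · calc q c₀ / r c₀ * r c ≤ 1 * r c :=
          mul_le_mul_of_nonneg_right ((div_lt_one hr₀).2 hqr₀).le (hr c hc)
      _ ≤ q c := by linarith

section RankingMatching

open Classical

variable {V C : Type*} (σ : V → C → C → Prop)

noncomputable def weaklyDefeated (D : Finset C) (S : Finset V) (a : C) : Finset C :=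
  D.filter fun c => ∃ i ∈ S, a = c ∨ σ i a c

theorem weaklyDefeated_mono {D D' : Finset C} (h : D ⊆ D') (S : Finset V) (a : C) :
    weaklyDefeated σ D S a ⊆ weaklyDefeated σ D' S a :=
  filter_subset_filter _ h

theorem weaklyDefeated_subset (D : Finset C) (S : Finset V) (a : C) :
    weaklyDefeated σ D S a ⊆ D :=
  filter_subset _ _

theorem sum_le_sum_weaklyDefeated_of_last [Fintype V] {D : Finset C} {w : V → C}
    (hwD : ∀ i, w i ∈ D) (hw : ∀ i, ∀ b ∈ D, b = w i ∨ σ i b (w i)) {a : C} (ha : a ∈ D) {p : V → ℝ}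
    (hp : ∀ i, 0 ≤ p i) (S : Finset V) :
    ∑ i ∈ S, p i ≤ ∑ c ∈ weaklyDefeated σ D S a, ∑ i with w i = c, p i := by
  rw [sum_fiberwise_eq_sum_filter univ _ w p]
  refine sum_le_sum_of_subset_of_nonneg (fun i hi => ?_) fun i _ _ => hp i
  exact mem_filter.2 ⟨mem_univ i, mem_filter.2 ⟨hwD i, i, hi, hw i a ha⟩⟩

theorem sum_le_sum_weaklyDefeated_of_peel {D D' : Finset C} (hD' : D' ⊆ D) {p : V → ℝ}
    {q r : C → ℝ} {t : ℝ} (ht : 0 ≤ t) (htr : ∀ c ∈ D, t * r c ≤ q c) {S : Finset V} {a : C}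
    (hpeeled : ∑ i ∈ S, (1 - t) * p i ≤ ∑ c ∈ weaklyDefeated σ D' S a, (q c - t * r c))
    (hr : ∑ i ∈ S, p i ≤ ∑ c ∈ weaklyDefeated σ D S a, r c) :
    ∑ i ∈ S, p i ≤ ∑ c ∈ weaklyDefeated σ D S a, q c :=
  calc ∑ i ∈ S, p i = ∑ i ∈ S, (1 - t) * p i + t * ∑ i ∈ S, p i := by
        rw [← mul_sum]; ring
    _ ≤ ∑ c ∈ weaklyDefeated σ D' S a, (q c - t * r c)
        + t * ∑ c ∈ weaklyDefeated σ D S a, r c :=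
        add_le_add hpeeled (mul_le_mul_of_nonneg_left hr ht)
    _ ≤ ∑ c ∈ weaklyDefeated σ D S a, (q c - t * r c) + t * ∑ c ∈ weaklyDefeated σ D S a, r c := by
        gcongr ?_ + _
        exact sum_le_sum_of_subset_of_nonneg (weaklyDefeated_mono σ hD' S a)
          fun c hc _ => sub_nonneg.2 (htr c (weaklyDefeated_subset σ D S a hc))
    _ = ∑ c ∈ weaklyDefeated σ D S a, q c := by
        rw [sum_sub_distrib, mul_sum]; ring

theorem exists_forall_sum_le_sum_weaklyDefeated [Fintype V] [Finite C]
    (hσ : ∀ i, IsStrictTotalOrder C (σ i)) (D : Finset C) (hD : D.Nonempty)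
    (p : V → ℝ) (q : C → ℝ) (hp : ∀ i, 0 ≤ p i) (hq : ∀ c ∈ D, 0 ≤ q c)
    (hpq : ∑ i, p i ≤ ∑ c ∈ D, q c) :
    ∃ a ∈ D, ∀ S : Finset V, ∑ i ∈ S, p i ≤ ∑ c ∈ weaklyDefeated σ D S a, q c := by
  induction D using Finset.strongInduction generalizing p q with
  | H D ih =>
  choose w hwD hw using fun i => (hσ i).exists_forall_eq_or_rel _ hD
  set r : C → ℝ := fun c => ∑ i with w i = c, p i
  have hr : ∀ c ∈ D, 0 ≤ r c := fun c _ => sum_nonneg fun i _ => hp i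
  have hrD : ∑ c ∈ D, r c = ∑ i, p i := sum_fiberwise_of_maps_to (fun i _ => hwD i) p
  have hlast {a} (ha : a ∈ D) := sum_le_sum_weaklyDefeated_of_last σ hwD hw ha hp
  by_cases hdom : ∀ c ∈ D, r c ≤ q c
  · obtain ⟨a, ha⟩ := hD
    exact ⟨a, ha, fun S => (hlast ha S).trans
      (sum_le_sum fun c hc => hdom c (weaklyDefeated_subset σ D S a hc))⟩
  push Not at hdom
  obtain ⟨t, ht0, ht1, c₀, hc₀, htc₀, htr⟩ := exists_smul_le_of_exists_lt hr hq hdom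
  have hq' : ∀ c ∈ D, 0 ≤ q c - t * r c := fun c hc => sub_nonneg.2 (htr c hc)
  have hq'D : ∑ c ∈ D.erase c₀, (q c - t * r c) = ∑ c ∈ D, q c - t * ∑ i, p i := by
    rw [sum_erase D (f := fun c => q c - t * r c) (sub_eq_zero.2 htc₀.symm), sum_sub_distrib,
      ← mul_sum, hrD]
  have hD' : (D.erase c₀).Nonempty := by
    by_contra hempty
    obtain rfl : D = {c₀} := by
      simpa [not_nonempty_iff_eq_empty, erase_eq_empty_iff, hD.ne_empty] using hempty
    obtain ⟨c, hc, hqr⟩ := hdom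
    rw [mem_singleton.1 hc] at hqr
    simp only [sum_singleton] at hrD hpq
    linarith
  obtain ⟨a, ha, hS⟩ := ih _ (erase_ssubset hc₀) hD' (fun i => (1 - t) * p i)
    (fun c => q c - t * r c) (fun i => mul_nonneg (by linarith) (hp i))
    (fun c hc => hq' c (mem_of_mem_erase hc)) (by rw [← mul_sum, hq'D]; nlinarith)
  exact ⟨a, mem_of_mem_erase ha, fun S =>
    sum_le_sum_weaklyDefeated_of_peel σ (erase_subset c₀ D) ht0 htr (hS S)
      (hlast (mem_of_mem_erase ha) S)⟩

end RankingMatching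

open Classical in
theorem stmt1_general {V C : Type*} [Fintype V] [Fintype C] [Nonempty C]
    (σ : V → C → C → Prop) (hσ : ∀ i, IsStrictTotalOrder C (σ i))
    (p : V → ℝ) (q : C → ℝ)
    (hp0 : ∀ i, 0 ≤ p i) (hq0 : ∀ c, 0 ≤ q c)
    (hp1 : ∑ i, p i = 1) (hq1 : ∑ c, q c = 1) :
    ∃ a : C, ∀ S : Finset V,
      ∑ i ∈ S, p i ≤
        ∑ c ∈ Finset.univ.filter (fun c => ∃ i ∈ S, a = c ∨ σ i a c), q c := by
  obtain ⟨a, -, ha⟩ := exists_forall_sum_le_sum_weaklyDefeated σ hσ univ univ_nonempty p q hp0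
    (fun c _ => hq0 c) (by rw [hp1, hq1])
  exact ⟨a, ha⟩

open Classical in
/-- Ranking-Matching Lemma. -/
theorem stmt1 {V C : Type*} [Fintype V] [Fintype C] [Nonempty V] [Nonempty C]
    (σ : V → C → C → Prop) (hσ : ∀ i, IsStrictTotalOrder C (σ i))
    (p : V → ℝ) (q : C → ℝ)
    (hp0 : ∀ i, 0 ≤ p i) (hq0 : ∀ c, 0 ≤ q c)
    (hp1 : ∑ i, p i = 1) (hq1 : ∑ c, q c = 1) :
    ∃ a : C, ∀ S : Finset V,
      ∑ i ∈ S, p i ≤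
        ∑ c ∈ Finset.univ.filter (fun c => ∃ i ∈ S, a = c ∨ σ i a c), q c :=
  stmt1_general σ hσ p q hp0 hq0 hp1 hq1
end

section
/- For any election E = (V, C, σ), there exists a candidate a ∈ C whose integral domination graph G(a) admits a perfect matching; that is, there exists a bijection M : V → V such that for every voter i ∈ V, candidate a is weakly preferred by i to the top choice of voter M(i): a ⪰_i top(M(i)). -/
/-!
Process the voters one at a time. The current voter `i` is matched to a remaining voter `j`
whose top choice is the one `i` likes least among the top choices still available; the
remaining voters are then matched recursively, and the candidate `a` produced by the recursion
is itself a top choice still available to `i`, so `i` weakly prefers `a` to `top j`.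
-/

open Finset

lemma Finset.exists_max_image_of_isStrictTotalOrder {α β : Type*} (r : β → β → Prop)
    [IsStrictTotalOrder β r] (f : α → β) {s : Finset α} (hs : s.Nonempty) :
    ∃ x ∈ s, ∀ y ∈ s, f y = f x ∨ r (f y) (f x) := by
  classical
  let := linearOrderOfSTO r
  exact s.exists_max_image f hs

theorem exists_injOn_mapsTo_top_dominated {V C : Type*} (σ : V → C → C → Prop)
    (hσ : ∀ i, IsStrictTotalOrder C (σ i)) (top : V → C) (L : Finset V) :
    ∀ R : Finset V, #L ≤ #R → R.Nonempty →
      ∃ j ∈ R, ∃ M : V → V, Set.InjOn M L ∧ Set.MapsTo M L R ∧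
        ∀ i ∈ L, top j = top (M i) ∨ σ i (top j) (top (M i)) := by
  classical
  induction L using Finset.induction_on with
  | empty =>
    intro R _ ⟨j, hj⟩
    exact ⟨j, hj, id, by simp, by simp [Set.MapsTo], by simp⟩
  | @insert i₁ L hi₁ ih =>
    intro R hcard hR
    have := hσ i₁
    obtain ⟨j₁, hj₁, hj₁_bottom⟩ := R.exists_max_image_of_isStrictTotalOrder (σ i₁) top hR
    rw [card_insert_of_notMem hi₁] at hcard
    by_cases hR' : (R.erase j₁).Nonempty
    swap
    · have hL : L = ∅ := by
        rw [not_nonempty_iff_eq_empty, ← card_eq_zero, card_erase_of_mem hj₁] at hR'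
        rw [← card_eq_zero]
        omega
      subst hL
      exact ⟨j₁, hj₁, fun _ => j₁, by simp, by simpa using hj₁, by simp⟩
    have hcard' : #L ≤ #(R.erase j₁) := by
      rw [card_erase_of_mem hj₁]
      omega
    obtain ⟨j, hj, M, hinj, hmaps, hdom⟩ := ih (R.erase j₁) hcard' hR'
    have hM_eq : Set.EqOn (Function.update M i₁ j₁) M L := fun i hi =>
      Function.update_of_ne (ne_of_mem_of_not_mem hi hi₁) _ _
    refine ⟨j, mem_of_mem_erase hj, Function.update M i₁ j₁, ?_, ?_, ?_⟩
    · rw [coe_insert, Set.injOn_insert (mod_cast hi₁), Function.update_self, hM_eq.image_eq]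
      exact ⟨hinj.congr hM_eq.symm, fun ⟨i, hi, hij⟩ => (mem_erase.1 (hmaps hi)).1 hij⟩
    · intro i hi
      rcases mem_insert.1 hi with rfl | hi
      · rwa [Function.update_self]
      · rw [hM_eq hi]
        exact mem_of_mem_erase (hmaps hi)
    · intro i hi
      rcases mem_insert.1 hi with rfl | hi
      · rw [Function.update_self]
        exact hj₁_bottom j (mem_of_mem_erase hj)
      · rw [hM_eq hi]
        exact hdom i hi

theorem stmt2_general {V C : Type*} [Fintype V] [Nonempty V]
    (σ : V → C → C → Prop) (hσ : ∀ i, IsStrictTotalOrder C (σ i))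
    (top : V → C) :
    ∃ a : C, ∃ M : V ≃ V, ∀ i : V, a = top (M i) ∨ σ i a (top (M i)) := by
  obtain ⟨j, -, M, hinj, -, hdom⟩ :=
    exists_injOn_mapsTo_top_dominated σ hσ top univ univ le_rfl univ_nonempty
  have hbij : Function.Bijective M :=
    Finite.injective_iff_bijective.1 (by simpa using hinj)
  exact ⟨top j, Equiv.ofBijective M hbij, fun i => hdom i (mem_univ i)⟩

/-- There is a candidate whose integral domination graph admits a perfect matching. -/
theorem stmt2 {V C : Type*} [Fintype V] [Fintype C] [Nonempty V] [Nonempty C]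
    (σ : V → C → C → Prop) (hσ : ∀ i, IsStrictTotalOrder C (σ i))
    (top : V → C) (htop : ∀ i c, c ≠ top i → σ i (top i) c) :
    ∃ a : C, ∃ M : V ≃ V, ∀ i : V, a = top (M i) ∨ σ i a (top (M i)) :=
  stmt2_general σ hσ top
end

section
/- Let E = (V, C, σ) be an election and a ∈ C a candidate. The integral domination graph G(a) = (V, V, E_a), where (i,j) ∈ E_a iff a ⪰_i top(j), admits an integral perfect matching if and only if the (p^uni, q^plu)-domination graph of a admits a fractional perfect matching, where p^uni(i) = 1/n for all voters i and q^plu(c) = plu(c)/n for all candidates c. -/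
open Classical in
/-- The integral domination graph of `a` admits a perfect matching iff the
`(p^uni, q^plu)`-domination graph of `a` admits a fractional perfect matching. -/
theorem stmt4 {V C : Type*} [Fintype V] [Fintype C] [Nonempty V]
    (σ : V → C → C → Prop) (hσ : ∀ i, IsStrictTotalOrder C (σ i))
    (top : V → C) (htop : ∀ i c, c ≠ top i → σ i (top i) c)
    (a : C) :
    (∃ M : V ≃ V, ∀ i : V, a = top (M i) ∨ σ i a (top (M i))) ↔
    (∃ w : V → C → ℝ, (∀ i c, 0 ≤ w i c) ∧
      (∀ i c, ¬ (a = c ∨ σ i a c) → w i c = 0) ∧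
      (∀ i, ∑ c, w i c = 1 / (Fintype.card V : ℝ)) ∧
      (∀ c, ∑ i, w i c =
        ((Finset.univ.filter (fun i => top i = c)).card : ℝ) / (Fintype.card V : ℝ))) := by
  classical
  have hn : (0 : ℝ) < (Fintype.card V : ℝ) := by
    exact_mod_cast Fintype.card_pos
  constructor
  · rintro ⟨M, hM⟩
    refine ⟨fun i c => if c = top (M i) then 1 / (Fintype.card V : ℝ) else 0, ?_, ?_, ?_, ?_⟩
    · intro i c; dsimp only; split <;> positivity
    · intro i c hc
      by_cases h : c = top (M i)
      · exact absurd (h ▸ hM i) hc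
      · simp [h]
    · intro i
      simp [Finset.sum_ite_eq']
    · intro c
      have : ∀ i : V, (if c = top (M i) then 1 / (Fintype.card V : ℝ) else 0)
          = (if top (M i) = c then 1 / (Fintype.card V : ℝ) else 0) := by
        intro i; simp [eq_comm]
      simp_rw [this]
      rw [← Finset.sum_filter, Finset.sum_const, nsmul_eq_mul]
      have hcard : (Finset.univ.filter (fun i => top (M i) = c)).card
          = (Finset.univ.filter (fun i => top i = c)).card := by
        apply Finset.card_bij' (fun i _ => M i) (fun j _ => M.symm j)
        · intro i hi; simpa using (Finset.mem_filter.mp hi).2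
        · intro j hj; simpa using (Finset.mem_filter.mp hj).2
        · intro i _; simp
        · intro j _; simp
      rw [hcard]; ring
  · rintro ⟨w, hw0, hwsupp, hrow, hcol⟩
    set r : V → V → Prop := fun i j => a = top j ∨ σ i a (top j) with hr
    set t : V → Finset V := fun i => Finset.univ.filter (r i) with ht
    have hall : ∀ s : Finset V, s.card ≤ (s.biUnion t).card := by
      intro s
      set D : Finset C := Finset.univ.filter (fun c => ∃ i ∈ s, w i c ≠ 0) with hD
      -- fibers over D are contained in the biUnion
      have hsub : D.biUnion (fun c => Finset.univ.filter (fun j => top j = c)) ⊆ s.biUnion t := by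
        intro j hj
        obtain ⟨c, hcD, hjc⟩ := Finset.mem_biUnion.mp hj
        have htopj : top j = c := (Finset.mem_filter.mp hjc).2
        obtain ⟨i, his, hwic⟩ := (Finset.mem_filter.mp hcD).2
        refine Finset.mem_biUnion.mpr ⟨i, his, ?_⟩
        refine Finset.mem_filter.mpr ⟨Finset.mem_univ _, ?_⟩
        rw [hr]
        subst htopj
        by_contra hcon
        exact hwic (hwsupp i (top j) hcon)
      have hdisj : (D : Set C).PairwiseDisjoint
          (fun c => Finset.univ.filter (fun j => top j = c)) := by
        intro c1 _ c2 _ hne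
        apply Finset.disjoint_left.mpr
        intro j hj1 hj2
        exact hne ((Finset.mem_filter.mp hj1).2 ▸ (Finset.mem_filter.mp hj2).2.symm ▸ rfl)
      have hcardD : ∑ c ∈ D, ((Finset.univ.filter (fun j => top j = c)).card : ℝ)
          ≤ ((s.biUnion t).card : ℝ) := by
        have := Finset.card_biUnion hdisj
        have hle := Finset.card_le_card hsub
        rw [this] at hle
        exact_mod_cast hle
      -- real-valued counting
      have key : (s.card : ℝ) / (Fintype.card V : ℝ) ≤
          ((s.biUnion t).card : ℝ) / (Fintype.card V : ℝ) := by
        have h1 : (s.card : ℝ) / (Fintype.card V : ℝ) = ∑ i ∈ s, ∑ c, w i c := by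
          rw [Finset.sum_congr rfl (fun i _ => hrow i), Finset.sum_const, nsmul_eq_mul]
          ring
        have h2 : ∑ i ∈ s, ∑ c, w i c = ∑ c ∈ D, ∑ i ∈ s, w i c := by
          rw [Finset.sum_comm]
          symm
          apply Finset.sum_subset (Finset.filter_subset _ _)
          intro c _ hcD
          apply Finset.sum_eq_zero
          intro i his
          by_contra hne
          exact hcD (Finset.mem_filter.mpr ⟨Finset.mem_univ _, ⟨i, his, hne⟩⟩)
        have h3 : ∑ c ∈ D, ∑ i ∈ s, w i c ≤ ∑ c ∈ D, ∑ i, w i c := by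
          apply Finset.sum_le_sum
          intro c _
          apply Finset.sum_le_sum_of_subset_of_nonneg (Finset.subset_univ _)
          intro i _ _; exact hw0 i c
        have h4 : ∑ c ∈ D, ∑ i, w i c
            = ∑ c ∈ D, ((Finset.univ.filter (fun j => top j = c)).card : ℝ)
              / (Fintype.card V : ℝ) := by
          exact Finset.sum_congr rfl (fun c _ => hcol c)
        rw [h1, h2]
        calc ∑ c ∈ D, ∑ i ∈ s, w i c ≤ ∑ c ∈ D, ∑ i, w i c := h3
          _ = ∑ c ∈ D, ((Finset.univ.filter (fun j => top j = c)).card : ℝ)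
              / (Fintype.card V : ℝ) := h4
          _ = (∑ c ∈ D, ((Finset.univ.filter (fun j => top j = c)).card : ℝ))
              / (Fintype.card V : ℝ) := by rw [Finset.sum_div]
          _ ≤ ((s.biUnion t).card : ℝ) / (Fintype.card V : ℝ) := by gcongr
      have := (div_le_div_iff_of_pos_right hn).mp key
      exact_mod_cast this
    obtain ⟨f, hfinj, hft⟩ := (Finset.all_card_le_biUnion_card_iff_existsInjective' t).mp hall
    have hbij : Function.Bijective f := (Finite.injective_iff_bijective).mp hfinj
    refine ⟨Equiv.ofBijective f hbij, fun i => ?_⟩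
    have := (Finset.mem_filter.mp (hft i)).2
    exact this
end

section
/- Let d be a metric on V ∪ C consistent with the preference profile σ (i.e., for each voter i, c ≻_i c' implies d(i,c) ≤ d(i,c')), and suppose the metric is α-decisive for some α ∈ [0,1] (i.e., d(i, top(i)) ≤ α · d(i, c) for every voter i and every candidate c ≠ top(i)). If candidate a ∈ C is such that the integral domination graph G(a) admits a perfect matching M : V → V (a bijection with a ⪰_i top(M(i)) for all i), then for every candidate b ∈ C, the social cost satisfies SC(a) ≤ (2 + α) · SC(b), where SC(c) = ∑_{i∈V} d(i,c). -/
/-- If the integral domination graph of `a` admits a perfect matching, then `a`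
has social cost at most `(2 + α)` times that of any candidate `b`, in any
`α`-decisive metric consistent with the preferences. -/
theorem stmt5 {V C X : Type*} [Fintype V] [Fintype C] [MetricSpace X]
    (vl : V → X) (cl : C → X)
    (σ : V → C → C → Prop) (hσ : ∀ i, IsStrictTotalOrder C (σ i))
    (hcons : ∀ i c c', σ i c c' → dist (vl i) (cl c) ≤ dist (vl i) (cl c'))
    (top : V → C) (htop : ∀ i c, c ≠ top i → σ i (top i) c)
    (α : ℝ) (hα0 : 0 ≤ α) (hα1 : α ≤ 1)
    (hdec : ∀ i c, c ≠ top i → dist (vl i) (cl (top i)) ≤ α * dist (vl i) (cl c))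
    (a : C) (M : V ≃ V) (hM : ∀ i : V, a = top (M i) ∨ σ i a (top (M i)))
    (b : C) :
    ∑ i, dist (vl i) (cl a) ≤ (2 + α) * ∑ i, dist (vl i) (cl b) := by
  have key : ∀ i : V, dist (vl i) (cl a) ≤
      dist (vl i) (cl b) + (1 + α) * dist (vl (M i)) (cl b) := by
    intro i
    set t := top (M i) with ht
    have h1 : dist (vl i) (cl a) ≤ dist (vl i) (cl t) := by
      rcases hM i with h | h
      · rw [ht, ← h]
      · exact hcons i a t h
    have h2 : dist (vl i) (cl t) ≤ dist (vl i) (cl b) + dist (cl b) (cl t) :=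
      dist_triangle _ _ _
    have h3 : dist (cl b) (cl t) ≤ (1 + α) * dist (vl (M i)) (cl b) := by
      by_cases hb : b = t
      · rw [hb, dist_self]
        positivity
      · have h4 : dist (cl b) (cl t) ≤ dist (cl b) (vl (M i)) + dist (vl (M i)) (cl t) :=
          dist_triangle _ _ _
        have h5 : dist (vl (M i)) (cl t) ≤ α * dist (vl (M i)) (cl b) :=
          hdec (M i) b (fun h => hb h)
        have h6 : dist (cl b) (vl (M i)) = dist (vl (M i)) (cl b) := dist_comm _ _
        nlinarith [dist_nonneg (x := vl (M i)) (y := cl b)]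
    linarith
  have hsum : ∑ i, dist (vl (M i)) (cl b) = ∑ i, dist (vl i) (cl b) :=
    M.sum_comp (fun i => dist (vl i) (cl b))
  calc ∑ i, dist (vl i) (cl a)
      ≤ ∑ i, (dist (vl i) (cl b) + (1 + α) * dist (vl (M i)) (cl b)) :=
        Finset.sum_le_sum (fun i _ => key i)
    _ = ∑ i, dist (vl i) (cl b) + (1 + α) * ∑ i, dist (vl (M i)) (cl b) := by
        rw [Finset.sum_add_distrib, Finset.mul_sum]
    _ = (2 + α) * ∑ i, dist (vl i) (cl b) := by rw [hsum]; ring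
end

section
/- Let d be a metric on V ∪ C consistent with the preference profile σ. If candidate a ∈ C admits a perfect matching M : V → V in its integral domination graph (a ⪰_i top(M(i)) for all i ∈ V), then for every candidate b, SC(a) ≤ 3 · SC(b); i.e., the candidate returned by PluralityMatching achieves distortion at most 3. -/
/-- If the integral domination graph of `a` admits a perfect matching, then `a`
has social cost at most `3` times that of any candidate `b`: PluralityMatching
achieves distortion at most 3. -/
theorem stmt6 {V C X : Type*} [Fintype V] [Fintype C] [MetricSpace X]
    (vl : V → X) (cl : C → X)
    (σ : V → C → C → Prop) (hσ : ∀ i, IsStrictTotalOrder C (σ i))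
    (hcons : ∀ i c c', σ i c c' → dist (vl i) (cl c) ≤ dist (vl i) (cl c'))
    (top : V → C) (htop : ∀ i c, c ≠ top i → σ i (top i) c)
    (a : C) (M : V ≃ V) (hM : ∀ i : V, a = top (M i) ∨ σ i a (top (M i)))
    (b : C) :
    ∑ i, dist (vl i) (cl a) ≤ 3 * ∑ i, dist (vl i) (cl b) := by
  have key : ∀ i : V, dist (vl i) (cl a) ≤ dist (vl i) (cl b)
      + 2 * dist (vl (M i)) (cl b) := by
    intro i
    have h1 : dist (vl i) (cl a) ≤ dist (vl i) (cl (top (M i))) := by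
      rcases hM i with h | h
      · rw [h]
      · exact hcons i _ _ h
    have h2 : dist (vl (M i)) (cl (top (M i))) ≤ dist (vl (M i)) (cl b) := by
      by_cases hb : b = top (M i)
      · rw [hb]
      · exact hcons (M i) _ _ (htop (M i) b hb)
    have h3 : dist (vl i) (cl (top (M i))) ≤
        dist (vl i) (cl b) + dist (cl b) (vl (M i)) + dist (vl (M i)) (cl (top (M i))) :=
      dist_triangle4 _ _ _ _
    have := dist_comm (cl b) (vl (M i))
    nlinarith [h1, h2, h3]
  calc ∑ i, dist (vl i) (cl a)
      ≤ ∑ i, (dist (vl i) (cl b) + 2 * dist (vl (M i)) (cl b)) :=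
        Finset.sum_le_sum fun i _ => key i
    _ = ∑ i, dist (vl i) (cl b) + 2 * ∑ i, dist (vl (M i)) (cl b) := by
        rw [Finset.sum_add_distrib, Finset.mul_sum]
    _ = ∑ i, dist (vl i) (cl b) + 2 * ∑ i, dist (vl i) (cl b) := by
        rw [M.sum_comp (fun i => dist (vl i) (cl b))]
    _ = 3 * ∑ i, dist (vl i) (cl b) := by ring
end

section
/- For any w ∈ (0,1], n ∈ ℕ (n ≥ 1), m ≥ 1, and nonnegative reals x_1, ..., x_m with x_i < n/w for all i and ∑_{i=1}^m x_i = n, it holds that ∑_{i=1}^m x_i / (n - w·x_i) ≥ m / (m - w). -/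
/-!
The function `t ↦ t / (c - w t)` is convex on `t < c / w`, so it lies above its tangent line at
the mean value `c / a` of the `x i`, where `a` is their number. Summing the tangent lines,
the linear terms cancel because `∑ x i = c`, leaving `a / (a - w)`.
-/

open Finset

theorem tangent_le_div_sub_mul {w c a t : ℝ} (hw : 0 ≤ w) (hc : 0 < c) (hwa : w < a)
    (ht : w * t < c) :
    1 / (a - w) + a ^ 2 / (c * (a - w) ^ 2) * (t - c / a) ≤ t / (c - w * t) := by
  have ha : 0 < a := hw.trans_lt hwa
  have hd : 0 < c - w * t := by linarith
  have hgap : t / (c - w * t) - (1 / (a - w) + a ^ 2 / (c * (a - w) ^ 2) * (t - c / a)) =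
      w * (c - a * t) ^ 2 / (c * (a - w) ^ 2 * (c - w * t)) := by
    have : a - w ≠ 0 := (sub_pos.2 hwa).ne'
    have : c - t * w ≠ 0 := by rw [mul_comm]; exact hd.ne'
    field_simp [hd.ne', ha.ne', hc.ne']
    ring
  have : 0 ≤ w * (c - a * t) ^ 2 / (c * (a - w) ^ 2 * (c - w * t)) := by positivity
  linarith

theorem lt_card_of_sum_eq {ι : Type*} {s : Finset ι} {x : ι → ℝ} {w c : ℝ} (hc : 0 < c) (hx : ∀ i ∈ s, w * x i < c) (hsum : ∑ i ∈ s, x i = c) : w < #s := by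
  have hs : s.Nonempty := by
    by_contra h
    rw [not_nonempty_iff_eq_empty.1 h, sum_empty] at hsum
    exact hc.ne hsum
  have : w * c < #s * c := by
    calc w * c = ∑ i ∈ s, w * x i := by rw [← mul_sum, hsum]
      _ < ∑ _i ∈ s, c := sum_lt_sum_of_nonempty hs hx
      _ = #s * c := by rw [sum_const, nsmul_eq_mul]
  exact lt_of_mul_lt_mul_right this hc.le

theorem card_div_card_sub_le_sum_div {ι : Type*} {s : Finset ι} {x : ι → ℝ} {w c : ℝ}
    (hw : 0 < w) (hc : 0 < c) (hx : ∀ i ∈ s, w * x i < c) (hsum : ∑ i ∈ s, x i = c) :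
    (#s : ℝ) / (#s - w) ≤ ∑ i ∈ s, x i / (c - w * x i) := by
  set a : ℝ := (#s : ℝ)
  have hwa : w < a := lt_card_of_sum_eq hc hx hsum
  have ha : a ≠ 0 := (hw.trans hwa).ne'
  calc a / (a - w)
      = ∑ i ∈ s, (1 / (a - w) + a ^ 2 / (c * (a - w) ^ 2) * (x i - c / a)) := by
        rw [sum_add_distrib, ← mul_sum, sum_sub_distrib, hsum, sum_const, sum_const,
          nsmul_eq_mul, nsmul_eq_mul, mul_div_cancel₀ c ha, sub_self, mul_zero, add_zero,
          mul_one_div]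
    _ ≤ ∑ i ∈ s, x i / (c - w * x i) :=
        sum_le_sum fun i hi => tangent_le_div_sub_mul hw.le hc hwa (hx i hi)

theorem stmt7_general (w : ℝ) (hw0 : 0 < w) (n : ℕ) (hn : 1 ≤ n)
    (m : ℕ) (x : Fin m → ℝ)
    (hxlt : ∀ i, x i < (n : ℝ) / w) (hsum : ∑ i, x i = (n : ℝ)) :
    (m : ℝ) / (m - w) ≤ ∑ i, x i / ((n : ℝ) - w * x i) := by
  have hnpos : (0 : ℝ) < n := by exact_mod_cast hn
  have hx : ∀ i ∈ univ, w * x i < n := fun i _ => by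
    rw [mul_comm, ← lt_div_iff₀ hw0]
    exact hxlt i
  simpa using card_div_card_sub_le_sum_div hw0 hnpos hx hsum

/-- Summation bound lemma. -/
theorem stmt7 (w : ℝ) (hw0 : 0 < w) (hw1 : w ≤ 1) (n : ℕ) (hn : 1 ≤ n)
    (m : ℕ) (hm : 1 ≤ m) (x : Fin m → ℝ) (hx0 : ∀ i, 0 ≤ x i)
    (hxlt : ∀ i, x i < (n : ℝ) / w) (hsum : ∑ i, x i = (n : ℝ)) :
    (m : ℝ) / (m - w) ≤ ∑ i, x i / ((n : ℝ) - w * x i) :=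
  stmt7_general w hw0 n hn m x hxlt hsum
end

section
/- Let E = (V, C, σ) be an election and a ∈ C. If the integral domination graph G(a) (on V ⊔ V with edge (i,j) iff a ⪰_i top(j)) admits a perfect matching, then plu(a) ≥ veto(a), where plu(a) is the number of voters ranking a first and veto(a) is the number of voters ranking a last. -/
theorem eq_of_isLast_of_eq_or_rel {C : Type*} {r : C → C → Prop} [IsStrictOrder C r] {a c : C}
    (hlast : ∀ b, b ≠ a → r b a) (h : a = c ∨ r a c) : c = a := by
  rcases h with rfl | hac
  · rfl
  · by_contra hca
    exact irrefl a (_root_.trans hac (hlast c hca))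

open Classical in
theorem stmt10_general {V C : Type*} [Fintype V] [Fintype C]
    (σ : V → C → C → Prop) (hσ : ∀ i, IsStrictTotalOrder C (σ i))
    (top : V → C)
    (a : C) (M : V ≃ V) (hM : ∀ i : V, a = top (M i) ∨ σ i a (top (M i))) :
    (Finset.univ.filter (fun i : V => ∀ c : C, c ≠ a → σ i c a)).card ≤
      (Finset.univ.filter (fun i : V => top i = a)).card := by
  -- the matching sends each voter ranking `a` last to a voter ranking `a` first
  refine Finset.card_le_card_of_injOn M (fun i hi => ?_) M.injective.injOn
  simp only [Finset.coe_filter, Finset.mem_univ, true_and, Set.mem_ofPred_eq] at hi ⊢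
  have := hσ i
  exact eq_of_isLast_of_eq_or_rel hi (hM i)

open Classical in
/-- If the integral domination graph of `a` admits a perfect matching, then the
plurality score of `a` is at least its veto score. -/
theorem stmt10 {V C : Type*} [Fintype V] [Fintype C]
    (σ : V → C → C → Prop) (hσ : ∀ i, IsStrictTotalOrder C (σ i))
    (top : V → C) (htop : ∀ i c, c ≠ top i → σ i (top i) c)
    (a : C) (M : V ≃ V) (hM : ∀ i : V, a = top (M i) ∨ σ i a (top (M i))) :
    (Finset.univ.filter (fun i : V => ∀ c : C, c ≠ a → σ i c a)).card ≤
      (Finset.univ.filter (fun i : V => top i = a)).card :=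
  stmt10_general σ hσ top a M hM
end

section
/- Let E = (V, C, σ) be an election and a a Condorcet winner (for every candidate b ≠ a, at least |V|/2 voters prefer a to b). Then for every candidate b, the separation graph G(a,b) = (V, V, E_{a,b}), where (i,j) ∈ E_{a,b} iff there exists c ∈ C with a ⪰_i c and c ⪰_j b, admits a perfect matching. In particular, every Condorcet winner belongs to the matching uncovered set. -/
open Classical in
/-- Every Condorcet winner is in the matching uncovered set: the separation graph
`G(a,b)` admits a perfect matching for every candidate `b`. -/
theorem stmt11 {V C : Type*} [Fintype V] [Fintype C]
    (σ : V → C → C → Prop) (hσ : ∀ i, IsStrictTotalOrder C (σ i))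
    (a : C)
    (hcond : ∀ b : C, b ≠ a →
      (Fintype.card V : ℝ) / 2 ≤ ((Finset.univ.filter (fun i : V => σ i a b)).card : ℝ)) :
    ∀ b : C, ∃ M : V ≃ V, ∀ i : V,
      ∃ c : C, (a = c ∨ σ i a c) ∧ (c = b ∨ σ (M i) c b) := by
  intro b
  by_cases hb : b = a
  · subst hb
    exact ⟨Equiv.refl V, fun i => ⟨b, Or.inl rfl, Or.inl rfl⟩⟩
  · set S : Finset V := Finset.univ.filter (fun i : V => σ i a b) with hS
    have hcard : (Finset.univ.filter (fun i : V => ¬ σ i a b)).card ≤ S.card := by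
      have h1 := hcond b hb
      have h2 : S.card + (Finset.univ.filter (fun i : V => ¬ σ i a b)).card
          = Fintype.card V := by
        simpa [hS] using Finset.card_filter_add_card_filter_not
          (s := (Finset.univ : Finset V)) (p := fun i : V => σ i a b)
      have h3 : (Fintype.card V : ℝ) ≤ 2 * S.card := by linarith
      have h4 : Fintype.card V ≤ 2 * S.card := by exact_mod_cast h3
      omega
    obtain ⟨T, hTS, hTcard⟩ := Finset.exists_subset_card_eq hcard
    have hce : Fintype.card {i : V // ¬ σ i a b} = Fintype.card {i : V // i ∈ T} := by
      rw [Fintype.card_subtype, Fintype.card_coe]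
      simpa using hTcard.symm
    let e : {i : V // ¬ σ i a b} ≃ {i : V // i ∈ T} := Fintype.equivOfCardEq hce
    refine ⟨e.extendSubtype, fun i => ?_⟩
    by_cases hi : σ (e.extendSubtype i) a b
    · exact ⟨a, Or.inl rfl, Or.inr hi⟩
    · by_cases hii : σ i a b
      · exact ⟨b, Or.inr hii, Or.inl rfl⟩
      · exfalso
        have := e.extendSubtype_mem i hii
        have : e.extendSubtype i ∈ S := hTS this
        simp [hS] at this
        exact hi this
end

section
/- Combined with the Ranking-Matching Lemma, the matching uncovered set of every election is non-empty: for any election E = (V, C, σ) there exists a candidate a such that for every b ∈ C the separation graph G(a,b) admits a perfect matching. -/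
/-!
Give every voter `j` its top candidate `top j`, and let voter `i` compare voters `j` by where
`i` ranks `top j`. It suffices to find a bijection `f` of the voters and a voter `j₀` such that
every `i` ranks `top (f i)` no higher than `top j₀`: then `a = top j₀` works for every `b`, with
`c = top (f i)`, since `top (f i) ⪰_{f i} b` always holds. Such `f` and `j₀` exist for any
family of row preferences: match a voter `i₀` to its least preferred remaining partner and
recurse on the rest; the column `j₀` produced by the recursion is also at least as good for `i₀`.
-/

open Finset

theorem exists_bijOn_forall_le_of_card_eq {V W α : Type*} [DecidableEq V] [DecidableEq W]
    [LinearOrder α] (κ : V → W → α) {L : Finset V} (hL : L.Nonempty) :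
    ∀ {R : Finset W}, #L = #R →
      ∃ f : V → W, Set.BijOn f L R ∧ ∃ j₀ ∈ R, ∀ i ∈ L, κ i (f i) ≤ κ i j₀ := by
  induction hL using Finset.Nonempty.cons_induction with
  | singleton i₀ =>
    intro R hR
    obtain ⟨j₀, rfl⟩ := card_eq_one.mp hR.symm
    exact ⟨fun _ ↦ j₀, by simp [Set.BijOn, Set.MapsTo, Set.InjOn, Set.SurjOn], j₀,
      mem_singleton_self j₀, by simp⟩
  | cons i₀ s hi₀ _ ih =>
    intro R hR
    obtain ⟨j₀, hj₀R, hj₀min⟩ :=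
      R.exists_min_image (κ i₀) (card_pos.mp (hR ▸ card_pos.mpr (cons_nonempty hi₀)))
    obtain ⟨f, hf, j₁, hj₁, hj₁le⟩ := @ih (R.erase j₀)
      (by rw [card_erase_of_mem hj₀R, ← hR, card_cons, Nat.add_sub_cancel])
    refine ⟨Function.update f i₀ j₀, ?_, j₁, mem_of_mem_erase hj₁, ?_⟩
    · have hupdate : Set.BijOn (Function.update f i₀ j₀) s (R.erase j₀) :=
        hf.congr fun i hi ↦ (Function.update_of_ne (ne_of_mem_of_not_mem hi hi₀) _ _).symm
      have := hupdate.insert (a := i₀) (by simp)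
      rw [Function.update_self, ← coe_insert i₀, ← coe_insert j₀, insert_erase hj₀R] at this
      simpa using this
    · intro i hi
      rcases mem_cons.mp hi with rfl | hi
      · simpa using hj₀min j₁ (mem_of_mem_erase hj₁)
      · rw [Function.update_of_ne (ne_of_mem_of_not_mem hi hi₀)]
        exact hj₁le i hi

section StrictTotalOrder

variable {C : Type*} [Fintype C] (r : C → C → Prop) [DecidableRel r] [IsStrictTotalOrder C r]

def rankBelow (c : C) : ℕ := #{x | r c x}

variable {r}

theorem rankBelow_lt_of_rel {c d : C} (h : r c d) : rankBelow r d < rankBelow r c := by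
  refine card_lt_card ⟨fun x hx ↦ ?_, fun hsub ↦ ?_⟩
  · simp only [mem_filter, mem_univ, true_and] at hx ⊢
    exact _root_.trans h hx
  · have : r d d := by simpa using hsub (by simpa using h : d ∈ ({x | r c x} : Finset C))
    exact irrefl d this

theorem eq_or_rel_of_rankBelow_le {c d : C} (h : rankBelow r d ≤ rankBelow r c) :
    c = d ∨ r c d := by
  rcases trichotomous_of r c d with hcd | rfl | hdc
  · exact Or.inr hcd
  · exact Or.inl rfl
  · exact absurd h (rankBelow_lt_of_rel hdc).not_ge

variable (r)

theorem exists_forall_eq_or_rel [Nonempty C] : ∃ t : C, ∀ c, t = c ∨ r t c := by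
  obtain ⟨t, -, ht⟩ := exists_max_image univ (rankBelow r) univ_nonempty
  exact ⟨t, fun c ↦ eq_or_rel_of_rankBelow_le (ht c (mem_univ c))⟩

end StrictTotalOrder

/-- The matching uncovered set of every election is non-empty. -/
theorem stmt13 {V C : Type*} [Fintype V] [Fintype C] [Nonempty V] [Nonempty C]
    (σ : V → C → C → Prop) (hσ : ∀ i, IsStrictTotalOrder C (σ i)) :
    ∃ a : C, ∀ b : C, ∃ M : V ≃ V, ∀ i : V,
      ∃ c : C, (a = c ∨ σ i a c) ∧ (c = b ∨ σ (M i) c b) := by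
  classical
  choose top htop using fun j ↦ exists_forall_eq_or_rel (σ j)
  obtain ⟨f, hf, j₀, -, hj₀⟩ := exists_bijOn_forall_le_of_card_eq
    (fun i j ↦ rankBelow (σ i) (top j)) univ_nonempty (R := univ) rfl
  have hbij : Function.Bijective f := Set.bijOn_univ.mp (by simpa using hf)
  refine ⟨top j₀, fun b ↦ ⟨Equiv.ofBijective f hbij, fun i ↦ ⟨top (f i), ?_, htop (f i) b⟩⟩⟩
  exact eq_or_rel_of_rankBelow_le (hj₀ i (mem_univ i))
end

section
/- Fix even m = 2ℓ and α ∈ [0,1]. In the metric where voters 1..ℓ have d(i, a_i) = α, d(i, a_j) = 1 for j ≠ i (j ≤ ℓ), and all candidates a_{ℓ+1},...,a_{2ℓ} and voters ℓ+1,...,2ℓ are at a single point at distance 1 from each voter in {1,...,ℓ} (with shortest-path distances otherwise), every candidate a_i with i ≤ ℓ has SC(a_i) = α + (ℓ-1) + ℓ(1+α), while every candidate a_i with i > ℓ has SC(a_i) = ℓ; hence the ratio SC(a_i)/SC(a_j) for i ≤ ℓ < j equals 2 + α - 2(1-α)/m. -/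
lemma stmt15_filter_lt (ℓ : ℕ) :
    (Finset.univ.filter (fun k : Fin (2 * ℓ) => (k : ℕ) < ℓ)) =
      (Finset.range ℓ).attachFin (fun m hm => by
        simp only [Finset.mem_range] at hm; omega) := by
  ext k; simp [Finset.mem_attachFin]

lemma stmt15_filter_ge (ℓ : ℕ) :
    (Finset.univ.filter (fun k : Fin (2 * ℓ) => ¬ (k : ℕ) < ℓ)) =
      (Finset.Ico ℓ (2 * ℓ)).attachFin (fun m hm => by
        simp only [Finset.mem_Ico] at hm; omega) := by
  ext k; simp [Finset.mem_attachFin, Finset.mem_Ico, Nat.not_lt, k.isLt]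

lemma stmt15_card_lt (ℓ : ℕ) :
    (Finset.univ.filter (fun k : Fin (2 * ℓ) => (k : ℕ) < ℓ)).card = ℓ := by
  rw [stmt15_filter_lt, Finset.card_attachFin, Finset.card_range]

lemma stmt15_card_ge (ℓ : ℕ) :
    (Finset.univ.filter (fun k : Fin (2 * ℓ) => ¬ (k : ℕ) < ℓ)).card = ℓ := by
  rw [stmt15_filter_ge, Finset.card_attachFin, Nat.card_Ico]; omega

/-- The deterministic lower bound instance for even `m = 2ℓ`: with the stated
distances from voters to candidates (voter `i` and candidate `a_i` indexed by
`Fin (2ℓ)`, with `top i = a_i`), the metric is `α`-decisive, candidates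
`a_i` with `i < ℓ` have social cost `α + (ℓ - 1) + ℓ(1 + α)`, candidates with
`i ≥ ℓ` have social cost `ℓ`, and the ratio equals `2 + α - 2(1 - α)/m`. -/
theorem stmt15 (ℓ : ℕ) (hℓ : 1 ≤ ℓ) (α : ℝ) (hα0 : 0 ≤ α) (hα1 : α ≤ 1)
    (d : Fin (2 * ℓ) → Fin (2 * ℓ) → ℝ)  -- d i j = distance from voter i to candidate a_j
    (h1 : ∀ i : Fin (2 * ℓ), (i : ℕ) < ℓ → d i i = α)
    (h2 : ∀ i j : Fin (2 * ℓ), (i : ℕ) < ℓ → (j : ℕ) < ℓ → i ≠ j → d i j = 1)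
    (h3 : ∀ i j : Fin (2 * ℓ), (i : ℕ) < ℓ → ℓ ≤ (j : ℕ) → d i j = 1)
    (h4 : ∀ i j : Fin (2 * ℓ), ℓ ≤ (i : ℕ) → ℓ ≤ (j : ℕ) → d i j = 0)
    (h5 : ∀ i j : Fin (2 * ℓ), ℓ ≤ (i : ℕ) → (j : ℕ) < ℓ → d i j = 1 + α) :
    -- α-decisiveness (the top choice of voter i is candidate a_i)
    (∀ i j : Fin (2 * ℓ), j ≠ i → d i i ≤ α * d i j) ∧
    -- social costs
    (∀ i : Fin (2 * ℓ), (i : ℕ) < ℓ →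
      ∑ k, d k i = α + ((ℓ : ℝ) - 1) + (ℓ : ℝ) * (1 + α)) ∧
    (∀ j : Fin (2 * ℓ), ℓ ≤ (j : ℕ) → ∑ k, d k j = (ℓ : ℝ)) ∧
    -- the resulting approximation ratio
    (∀ i j : Fin (2 * ℓ), (i : ℕ) < ℓ → ℓ ≤ (j : ℕ) →
      (∑ k, d k i) / (∑ k, d k j) = 2 + α - 2 * (1 - α) / (2 * ℓ : ℝ)) := by
  have hdec : ∀ i j : Fin (2 * ℓ), j ≠ i → d i i ≤ α * d i j := by
    intro i j hji
    by_cases hi : (i : ℕ) < ℓ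
    · rw [h1 i hi]
      by_cases hj : (j : ℕ) < ℓ
      · rw [h2 i j hi hj (Ne.symm hji)]; linarith
      · rw [h3 i j hi (Nat.le_of_not_lt hj)]; linarith
    · rw [h4 i i (Nat.le_of_not_lt hi) (Nat.le_of_not_lt hi)]
      by_cases hj : (j : ℕ) < ℓ
      · rw [h5 i j (Nat.le_of_not_lt hi) hj]; nlinarith
      · rw [h4 i j (Nat.le_of_not_lt hi) (Nat.le_of_not_lt hj)]; simp
  have hsc1 : ∀ i : Fin (2 * ℓ), (i : ℕ) < ℓ →
      ∑ k, d k i = α + ((ℓ : ℝ) - 1) + (ℓ : ℝ) * (1 + α) := by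
    intro i hi
    rw [← Finset.sum_filter_add_sum_filter_not Finset.univ
      (fun k : Fin (2 * ℓ) => (k : ℕ) < ℓ)]
    have e1 : ∑ k ∈ Finset.univ.filter (fun k : Fin (2 * ℓ) => (k : ℕ) < ℓ), d k i
        = ∑ k ∈ Finset.univ.filter (fun k : Fin (2 * ℓ) => (k : ℕ) < ℓ),
            (1 + if k = i then α - 1 else 0) := by
      refine Finset.sum_congr rfl (fun k hk => ?_)
      simp only [Finset.mem_filter] at hk
      by_cases hki : k = i
      · subst hki; rw [h1 k hk.2]; simp
      · rw [h2 k i hk.2 hi hki]; simp [hki]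
    have e2 : ∑ k ∈ Finset.univ.filter (fun k : Fin (2 * ℓ) => ¬ (k : ℕ) < ℓ), d k i
        = ∑ _k ∈ Finset.univ.filter (fun k : Fin (2 * ℓ) => ¬ (k : ℕ) < ℓ), (1 + α) := by
      refine Finset.sum_congr rfl (fun k hk => ?_)
      simp only [Finset.mem_filter] at hk
      exact h5 k i (Nat.le_of_not_lt hk.2) hi
    rw [e1, e2, Finset.sum_add_distrib, Finset.sum_const, Finset.sum_const,
      Finset.sum_ite_eq' _ i, stmt15_card_lt, stmt15_card_ge]
    have : i ∈ Finset.univ.filter (fun k : Fin (2 * ℓ) => (k : ℕ) < ℓ) := by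
      simp [hi]
    rw [if_pos this]
    have hℓ1 : (1 : ℝ) ≤ (ℓ : ℝ) := by exact_mod_cast hℓ
    simp [nsmul_eq_mul]; ring
  have hsc2 : ∀ j : Fin (2 * ℓ), ℓ ≤ (j : ℕ) → ∑ k, d k j = (ℓ : ℝ) := by
    intro j hj
    rw [← Finset.sum_filter_add_sum_filter_not Finset.univ
      (fun k : Fin (2 * ℓ) => (k : ℕ) < ℓ)]
    have e1 : ∑ k ∈ Finset.univ.filter (fun k : Fin (2 * ℓ) => (k : ℕ) < ℓ), d k j
        = ∑ _k ∈ Finset.univ.filter (fun k : Fin (2 * ℓ) => (k : ℕ) < ℓ), (1 : ℝ) := by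
      refine Finset.sum_congr rfl (fun k hk => ?_)
      simp only [Finset.mem_filter] at hk
      exact h3 k j hk.2 hj
    have e2 : ∑ k ∈ Finset.univ.filter (fun k : Fin (2 * ℓ) => ¬ (k : ℕ) < ℓ), d k j
        = 0 := by
      refine Finset.sum_eq_zero (fun k hk => ?_)
      simp only [Finset.mem_filter] at hk
      exact h4 k j (Nat.le_of_not_lt hk.2) hj
    rw [e1, e2, Finset.sum_const, stmt15_card_lt]
    simp
  refine ⟨hdec, hsc1, hsc2, fun i j hi hj => ?_⟩
  rw [hsc1 i hi, hsc2 j hj]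
  have hℓ0 : (0 : ℝ) < (ℓ : ℝ) := by exact_mod_cast hℓ
  field_simp
  ring
end

section
/- Let d be an α-decisive metric consistent with σ, let a be a candidate whose integral domination graph G(a) admits a perfect matching M, and let b be any candidate. Then for every k ∈ {1,...,n}, φ_k(a,d) ≤ (2+α)·φ_k(b,d), where φ_k(c,d) is the sum of the k largest values among {d(i,c) : i ∈ V}. That is, PluralityMatching has fairness ratio at most 2 + α. -/
/-- Fairness-ratio bound: if `a` admits a perfect matching in its integral
domination graph, then for every `k` and every candidate `b`,
`φ_k(a, d) ≤ (2 + α) · φ_k(b, d)`, where `φ_k(c, d)` is the maximum, over sets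
`S` of `k` voters, of the total distance from `S` to `c`. -/
theorem stmt18 {V C X : Type*} [Fintype V] [Fintype C] [MetricSpace X]
    (vl : V → X) (cl : C → X)
    (σ : V → C → C → Prop) (hσ : ∀ i, IsStrictTotalOrder C (σ i))
    (hcons : ∀ i c c', σ i c c' → dist (vl i) (cl c) ≤ dist (vl i) (cl c'))
    (top : V → C) (htop : ∀ i c, c ≠ top i → σ i (top i) c)
    (α : ℝ) (hα0 : 0 ≤ α) (hα1 : α ≤ 1)
    (hdec : ∀ i c, c ≠ top i → dist (vl i) (cl (top i)) ≤ α * dist (vl i) (cl c))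
    (a : C) (M : V ≃ V) (hM : ∀ i : V, a = top (M i) ∨ σ i a (top (M i)))
    (b : C) (k : ℕ) (hk1 : 1 ≤ k) (hk2 : k ≤ Fintype.card V) :
    sSup {x : ℝ | ∃ S : Finset V, S.card = k ∧ x = ∑ i ∈ S, dist (vl i) (cl a)} ≤
      (2 + α) *
        sSup {x : ℝ | ∃ S : Finset V, S.card = k ∧ x = ∑ i ∈ S, dist (vl i) (cl b)} := by
  classical
  set Tb := {x : ℝ | ∃ S : Finset V, S.card = k ∧ x = ∑ i ∈ S, dist (vl i) (cl b)} with hTb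
  have hfin : Tb.Finite := by
    have : Tb ⊆ (fun S : Finset V => ∑ i ∈ S, dist (vl i) (cl b)) '' Set.univ := by
      rintro x ⟨S, _, rfl⟩; exact ⟨S, trivial, rfl⟩
    exact Set.Finite.subset ((Set.finite_univ).image _) this
  have hbdd : BddAbove Tb := hfin.bddAbove
  have hmem : ∀ S : Finset V, S.card = k → (∑ i ∈ S, dist (vl i) (cl b)) ≤ sSup Tb := by
    intro S hS
    exact le_csSup hbdd ⟨S, hS, rfl⟩
  obtain ⟨S0, -, hS0⟩ := Finset.exists_subset_card_eq
    (s := (Finset.univ : Finset V)) (n := k) (by simpa using hk2)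
  have hsup0 : 0 ≤ sSup Tb :=
    le_trans (Finset.sum_nonneg fun i _ => dist_nonneg) (hmem S0 hS0)
  -- pointwise bound: d(i,a) ≤ d(i,b) + (1+α) * d(M i, b)
  have key : ∀ i : V,
      dist (vl i) (cl a) ≤ dist (vl i) (cl b) + (1 + α) * dist (vl (M i)) (cl b) := by
    intro i
    set j := M i
    have h1 : dist (vl i) (cl a) ≤ dist (vl i) (cl (top j)) := by
      rcases hM i with h | h
      · rw [← h]
      · exact hcons i a (top j) h
    by_cases hb : b = top j
    · rw [← hb] at h1
      nlinarith [dist_nonneg (x := vl j) (y := cl b)]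
    · have h2 : dist (vl j) (cl (top j)) ≤ α * dist (vl j) (cl b) := hdec j b hb
      have h3 : dist (vl i) (cl (top j)) ≤
          dist (vl i) (cl b) + dist (cl b) (vl j) + dist (vl j) (cl (top j)) :=
        dist_triangle4 _ _ _ _
      rw [dist_comm (cl b) (vl j)] at h3
      linarith
  -- main bound
  apply Real.sSup_le
  · rintro x ⟨S, hS, rfl⟩
    have hsum : ∑ i ∈ S, dist (vl i) (cl a) ≤
        ∑ i ∈ S, dist (vl i) (cl b) + (1 + α) * ∑ i ∈ S, dist (vl (M i)) (cl b) := by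
      rw [Finset.mul_sum, ← Finset.sum_add_distrib]
      exact Finset.sum_le_sum fun i _ => key i
    have himg : ∑ i ∈ S, dist (vl (M i)) (cl b)
        = ∑ j ∈ S.image M, dist (vl j) (cl b) := by
      rw [Finset.sum_image (fun x _ y _ h => M.injective h)]
    have hcard : (S.image M).card = k := by
      rw [Finset.card_image_of_injective _ M.injective, hS]
    have h1 : ∑ i ∈ S, dist (vl i) (cl b) ≤ sSup Tb := hmem S hS
    have h2 : ∑ i ∈ S, dist (vl (M i)) (cl b) ≤ sSup Tb := by
      rw [himg]; exact hmem _ hcard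
    nlinarith
  · positivity
end
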